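/- Weak normalization of the simply-typed λ-calculus (pure function fragment): every closed well-typed term ⊢ t : A, when run in the Krivine machine as ⟨t | ⋆⟩, reaches a normal configuration; consequently t is weakly normalizing for weak head reduction. -/

import Mathlib

/-!
Realizability with the Krivine machine as the pole: a configuration is good when the machine
reaches a normal form from it. A type `A` is interpreted by a set of stacks `Falsity A` (only `⋆`
at the base type; `⋆` and the stacks `u · e` with `u ∈ Truth A`, `e ∈ Falsity B` at `A → B`), and
`Truth A` consists of the closed terms that are good against every stack of `Falsity A`. The
adequacy lemma says that a closing substitution by realizers sends a term of type `A` into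
`Truth A`; since `⋆ ∈ Falsity A` for every `A`, a closed typable term `t` normalizes from
`⟨t | ⋆⟩`. Reading a configuration `⟨t | u₁ ⋯ uₙ⟩` back as the term `t u₁ ⋯ uₙ` turns machine
runs into weak head reductions and normal configurations into weak head normal forms.
-/

/-- λ-terms in de Bruijn representation. -/
inductive Tm where
  | var : Nat → Tm
  | lam : Tm → Tm
  | app : Tm → Tm → Tm

/-- Shift free variables ≥ d by one. -/
def Tm.shift (d : Nat) : Tm → Tm
  | .var n => if n < d then .var n else .var (n + 1)
  | .lam t => .lam (t.shift (d + 1))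
  | .app t u => .app (t.shift d) (u.shift d)

/-- Substitute `u` for variable `k` (capture-avoiding, de Bruijn). -/
def Tm.subst (k : Nat) (u : Tm) : Tm → Tm
  | .var n => if n < k then .var n else if n = k then u else .var (n - 1)
  | .lam t => .lam (Tm.subst (k + 1) (u.shift 0) t)
  | .app t v => .app (Tm.subst k u t) (Tm.subst k u v)

/-- `t[u/x]` for the outermost variable. -/
def Tm.subst0 (t u : Tm) : Tm := Tm.subst 0 u t

/-- KAM contexts (stacks). -/
inductive Ctx where
  | star : Ctx
  | cons : Tm → Ctx → Ctx

/-- KAM machine configurations ⟨t | e⟩. -/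
structure Machine where
  tm : Tm
  ctx : Ctx

/-- KAM machine reduction. -/
inductive Step : Machine → Machine → Prop
  | app (t u : Tm) (e : Ctx) : Step ⟨.app t u, e⟩ ⟨t, .cons u e⟩
  | lam (t u : Tm) (e : Ctx) : Step ⟨.lam t, .cons u e⟩ ⟨t.subst0 u, e⟩


/-- Weak head (call-by-name) reduction on λ-terms. -/
inductive WHRed : Tm → Tm → Prop
  | beta (t u : Tm) : WHRed (.app (.lam t) u) (t.subst0 u)
  | app {t t' : Tm} (u : Tm) : WHRed t t' → WHRed (.app t u) (.app t' u)

/-- Simple types: a base type and function types. -/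
inductive Ty where
  | base : Ty
  | arrow : Ty → Ty → Ty

/-- Typing judgment of the simply-typed λ-calculus (de Bruijn contexts). -/
inductive HasTy : List Ty → Tm → Ty → Prop
  | var {Γ n A} : Γ[(n : Nat)]? = some A → HasTy Γ (.var n) A
  | lam {Γ t A B} : HasTy (A :: Γ) t B → HasTy Γ (.lam t) (.arrow A B)
  | app {Γ t u A B} : HasTy Γ t (.arrow A B) → HasTy Γ u A → HasTy Γ (.app t u) B

open Relation

namespace Tm

def Closed : Tm → Nat → Prop
  | .var n, d => n < d
  | .lam t, d => t.Closed (d + 1)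
  | .app t u, d => t.Closed d ∧ u.Closed d

theorem Closed.mono : ∀ {t : Tm} {d d' : Nat}, d ≤ d' → t.Closed d → t.Closed d'
  | .var _, _, _, h, ht => lt_of_lt_of_le ht h
  | .lam t, _, _, h, ht => Closed.mono (t := t) (Nat.succ_le_succ h) ht
  | .app _ _, _, _, h, ht => ⟨Closed.mono h ht.1, Closed.mono h ht.2⟩

theorem shift_of_closed : ∀ {t : Tm} {d : Nat}, t.Closed d → t.shift d = t
  | .var _, _, h => if_pos h
  | .lam _, _, h => congrArg lam (shift_of_closed h)
  | .app _ _, _, h => by rw [shift, shift_of_closed h.1, shift_of_closed h.2]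

theorem subst_of_closed : ∀ {t : Tm} {k : Nat} (u : Tm), t.Closed k → subst k u t = t
  | .var _, _, _, h => if_pos h
  | .lam _, _, _, h => congrArg lam (subst_of_closed _ h)
  | .app _ _, _, u, h => by rw [subst, subst_of_closed u h.1, subst_of_closed u h.2]

theorem Closed.subst : ∀ {t u : Tm} {k n : Nat}, u.Closed 0 → k ≤ n →
    t.Closed (n + 1) → (subst k u t).Closed n
  | .var m, u, k, n, hu, hk, ht => by
    have ht : m < n + 1 := ht
    unfold Tm.subst
    split_ifs
    · show m < n; omega
    · exact hu.mono (Nat.zero_le n)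
    · show m - 1 < n; omega
  | .lam t, u, k, n, hu, hk, ht => by
    rw [Tm.subst, shift_of_closed hu]
    exact Closed.subst (t := t) hu (Nat.succ_le_succ hk) ht
  | .app _ _, _, _, _, hu, hk, ht => ⟨Closed.subst hu hk ht.1, Closed.subst hu hk ht.2⟩

theorem subst_subst_of_closed : ∀ {t u v : Tm} {j k : Nat}, u.Closed 0 → v.Closed 0 → j ≤ k →
    subst j u (subst (k + 1) v t) = subst k v (subst j u t)
  | .var n, u, v, j, k, hu, hv, hjk => by
    have hvu := subst_of_closed u (hv.mono (Nat.zero_le j))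
    have huv := subst_of_closed v (hu.mono (Nat.zero_le k))
    simp only [subst]
    split_ifs <;> (try simp only [subst]) <;> (try split_ifs) <;>
      first | (exfalso; omega) | simp_all
  | .lam t, u, v, j, k, hu, hv, hjk => by
    simp only [subst, shift_of_closed hu, shift_of_closed hv]
    rw [subst_subst_of_closed (t := t) hu hv (Nat.succ_le_succ hjk)]
  | .app t w, u, v, j, k, hu, hv, hjk => by
    simp only [subst]
    rw [subst_subst_of_closed (t := t) hu hv hjk, subst_subst_of_closed (t := w) hu hv hjk]

/-- For closed `σ`, the simultaneous substitution of `σ` for the indices `0, 1, …`. -/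
def msubst : Tm → List Tm → Tm
  | t, [] => t
  | t, u :: σ => (t.subst0 u).msubst σ

theorem msubst_app : ∀ (a b : Tm) (σ : List Tm), (app a b).msubst σ = app (a.msubst σ) (b.msubst σ)
  | _, _, [] => rfl
  | _, _, _ :: σ => msubst_app _ _ σ

theorem msubst_of_closed : ∀ {t : Tm} (σ : List Tm), t.Closed 0 → t.msubst σ = t
  | _, [], _ => rfl
  | _, u :: σ, h => by rw [msubst, subst0, subst_of_closed u h, msubst_of_closed σ h]

theorem Closed.msubst : ∀ {t : Tm} {σ : List Tm}, t.Closed σ.length → (∀ u ∈ σ, u.Closed 0) →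
    (t.msubst σ).Closed 0
  | _, [], ht, _ => ht
  | t, u :: σ, ht, hσ =>
    Closed.msubst (t := subst0 t u) (σ := σ)
      (Closed.subst (hσ u List.mem_cons_self) (Nat.zero_le _) ht)
      fun v hv => hσ v (List.mem_cons_of_mem u hv)

theorem msubst_lam : ∀ (t : Tm) {σ : List Tm}, (∀ u ∈ σ, u.Closed 0) →
    ∃ t', (lam t).msubst σ = lam t' ∧ ∀ u, u.Closed 0 → t'.subst0 u = (t.subst0 u).msubst σ
  | t, [], _ => ⟨t, rfl, fun _ _ => rfl⟩
  | t, v :: σ, hσ => by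
    have hv : v.Closed 0 := hσ v List.mem_cons_self
    obtain ⟨t', hlam, hbody⟩ :=
      msubst_lam (subst 1 v t) fun w hw => hσ w (List.mem_cons_of_mem v hw)
    refine ⟨t', by rwa [msubst, subst0, subst, shift_of_closed hv], fun u hu => ?_⟩
    rw [hbody u hu, msubst, subst0, subst0, subst0, subst_subst_of_closed hu hv le_rfl]

end Tm

theorem HasTy.closed {Γ : List Ty} {t : Tm} {A : Ty} (h : HasTy Γ t A) : t.Closed Γ.length := by
  induction h with
  | var h => exact (List.getElem?_eq_some_iff.mp h).1
  | lam _ ih => exact ih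
  | app _ _ ih₁ ih₂ => exact ⟨ih₁, ih₂⟩

def Normalizing (m : Machine) : Prop :=
  ∃ m', ReflTransGen Step m m' ∧ ¬∃ m'', Step m' m''

theorem Normalizing.of_step {m m' : Machine} (h : Step m m') (hm' : Normalizing m') :
    Normalizing m :=
  let ⟨m'', hrun, hnf⟩ := hm'
  ⟨m'', .head h hrun, hnf⟩

/-- The falsity value `‖A‖`; `Truth A` is unfolded at the arrow to keep the recursion structural. -/
def Falsity : Ty → Ctx → Prop
  | _, .star => True
  | .base, .cons _ _ => False
  | .arrow A B, .cons u e =>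
    (u.Closed 0 ∧ ∀ e', Falsity A e' → Normalizing ⟨u, e'⟩) ∧ Falsity B e

def Truth (A : Ty) : Set Tm := {t | t.Closed 0 ∧ ∀ e, Falsity A e → Normalizing ⟨t, e⟩}

theorem star_mem_falsity (A : Ty) : Falsity A .star := by
  cases A <;> trivial

theorem app_mem_truth {t u : Tm} {A B : Ty} (ht : t ∈ Truth (.arrow A B)) (hu : u ∈ Truth A) :
    Tm.app t u ∈ Truth B :=
  ⟨⟨ht.1, hu.1⟩, fun e he => .of_step (.app t u e) (ht.2 _ ⟨hu, he⟩)⟩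

theorem lam_mem_truth {t : Tm} {A B : Ty} (hclosed : (Tm.lam t).Closed 0)
    (hbody : ∀ u ∈ Truth A, t.subst0 u ∈ Truth B) : Tm.lam t ∈ Truth (.arrow A B) := by
  refine ⟨hclosed, fun e he => ?_⟩
  cases e with
  | star => exact ⟨_, .refl, fun ⟨_, h⟩ => nomatch h⟩
  | cons u e => exact .of_step (.lam t u e) ((hbody u he.1).2 e he.2)

section Adequacy

variable {Γ : List Ty} {σ : List Tm}

theorem closed_of_forall₂_truth (hσ : List.Forall₂ (fun A u => u ∈ Truth A) Γ σ) :
    ∀ u ∈ σ, u.Closed 0 := by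
  induction hσ with
  | nil => simp
  | cons hu _ ih => exact List.forall_mem_cons.mpr ⟨hu.1, ih⟩

theorem msubst_var_mem_truth (hσ : List.Forall₂ (fun A u => u ∈ Truth A) Γ σ) :
    ∀ {n : Nat} {A : Ty}, Γ[n]? = some A → (Tm.var n).msubst σ ∈ Truth A := by
  induction hσ with
  | nil => simp
  | @cons B u Γ σ hu hσ ih =>
    rintro (_ | n) A hn
    · obtain rfl : B = A := Option.some.inj hn
      rw [Tm.msubst, Tm.subst0, Tm.subst, if_neg (Nat.lt_irrefl 0), if_pos rfl,
        Tm.msubst_of_closed σ hu.1]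
      exact hu
    · rw [Tm.msubst, Tm.subst0, Tm.subst, if_neg (Nat.not_lt_zero _), if_neg n.succ_ne_zero]
      exact ih hn

theorem HasTy.msubst_mem_truth {t : Tm} {A : Ty} (ht : HasTy Γ t A) :
    List.Forall₂ (fun A u => u ∈ Truth A) Γ σ → t.msubst σ ∈ Truth A := by
  induction ht generalizing σ with
  | var h => exact fun hσ => msubst_var_mem_truth hσ h
  | app _ _ ih₁ ih₂ =>
    intro hσ
    rw [Tm.msubst_app]
    exact app_mem_truth (ih₁ hσ) (ih₂ hσ)
  | @lam Γ t A B ht ih =>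
    intro hσ
    have hσc := closed_of_forall₂_truth hσ
    have hclosed : ((Tm.lam t).msubst σ).Closed 0 :=
      Tm.Closed.msubst (hσ.length_eq ▸ (HasTy.lam ht).closed) hσc
    obtain ⟨t', hlam, hbody⟩ := Tm.msubst_lam t hσc
    rw [hlam] at hclosed ⊢
    refine lam_mem_truth hclosed fun u hu => ?_
    rw [hbody u hu.1]
    exact ih (.cons hu hσ)

end Adequacy

def Ctx.plug : Ctx → Tm → Tm
  | .star, t => t
  | .cons u e, t => e.plug (.app t u)

def Machine.unload (m : Machine) : Tm := m.ctx.plug m.tm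

theorem WHRed.plug : ∀ (e : Ctx) {a b : Tm}, WHRed a b → WHRed (e.plug a) (e.plug b)
  | .star, _, _, h => h
  | .cons u e, _, _, h => WHRed.plug e (.app u h)

theorem Step.unload {m m' : Machine} (h : Step m m') : ReflTransGen WHRed m.unload m'.unload := by
  cases h with
  | app => exact .refl
  | lam t u e => exact .single (WHRed.plug e (.beta t u))

theorem Ctx.plug_not_whred : ∀ (e : Ctx) {t : Tm}, (¬∃ r, WHRed t r) → (∀ s, t ≠ .lam s) →
    ¬∃ r, WHRed (e.plug t) r
  | .star, _, hnf, _ => hnf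
  | .cons u e, t, hnf, hlam => by
    refine e.plug_not_whred ?_ fun _ h => nomatch h
    rintro ⟨r, hr⟩
    cases hr with
    | beta s _ => exact hlam s rfl
    | app _ h => exact hnf ⟨_, h⟩

theorem Machine.unload_not_whred {m : Machine} (hm : ¬∃ m', Step m m') :
    ¬∃ u, WHRed m.unload u := by
  obtain ⟨t, e⟩ := m
  cases t with
  | var n => exact e.plug_not_whred (fun ⟨_, h⟩ => nomatch h) fun _ h => nomatch h
  | lam s =>
    cases e with
    | star => exact fun ⟨_, h⟩ => nomatch h
    | cons u e => exact absurd ⟨_, .lam s u e⟩ hm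
  | app a b => exact absurd ⟨_, .app a b e⟩ hm

/-- Weak normalization of the simply-typed λ-calculus: every closed well-typed
term ⊢ t : A, run in the Krivine machine as ⟨t | ⋆⟩, reaches a normal
configuration; consequently t is weakly normalizing for weak head reduction. -/
theorem weak_normalization {t : Tm} {A : Ty} (ht : HasTy [] t A) :
    (∃ m : Machine, Relation.ReflTransGen Step ⟨t, .star⟩ m ∧ ¬∃ m', Step m m') ∧
    (∃ u : Tm, Relation.ReflTransGen WHRed t u ∧ ¬∃ u', WHRed u u') := by
  obtain ⟨m, hrun, hnf⟩ : Normalizing ⟨t, .star⟩ :=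
    (ht.msubst_mem_truth .nil).2 .star (star_mem_falsity A)
  exact ⟨⟨m, hrun, hnf⟩, m.unload, hrun.lift' Machine.unload (fun _ _ h => h.unload),
    Machine.unload_not_whred hnf⟩
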